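/- Let k ≥ 3 and let K_k⁺ be the graph formed by adding a pendant edge to a clique of size k (so K_k⁺ has k+1 vertices). Then M_{K_k⁺}(n) ≤ 3 for all n. -/

import Mathlib

open SimpleGraph Finset

/-- `f` maps `H` to a copy of `H` inside `G`. -/
def IsCopyOf {α V : Type*} (H : SimpleGraph α) (G : SimpleGraph V) (f : α → V) : Prop :=
  Function.Injective f ∧ ∀ a b, H.Adj a b → G.Adj (f a) (f b)

/-- One round of the `H`-bootstrap process: add every edge whose addition
creates a new copy of `H` (i.e. the edge is the last missing edge of a copy of `H`). -/
def bootStep {α V : Type*} (H : SimpleGraph α) (G : SimpleGraph V) : SimpleGraph V where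
  Adj u v := G.Adj u v ∨ (u ≠ v ∧ ∃ f : α → V,
      IsCopyOf H (G ⊔ SimpleGraph.fromEdgeSet {s(u, v)}) f ∧
      ∃ a b, H.Adj a b ∧ f a = u ∧ f b = v)
  symm := by
    constructor
    intro u v h
    rcases h with h | ⟨hne, f, hf, a, b, hab, hfa, hfb⟩
    · exact Or.inl h.symm
    · refine Or.inr ⟨hne.symm, f, ?_, b, a, hab.symm, hfb, hfa⟩
      rwa [Sym2.eq_swap]
  loopless := by
    constructor
    intro u h
    rcases h with h | ⟨hne, _⟩
    · exact G.irrefl h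
    · exact hne rfl

/-- The `H`-bootstrap process on starting graph `G`. -/
def bootProc {α V : Type*} (H : SimpleGraph α) (G : SimpleGraph V) : ℕ → SimpleGraph V
  | 0 => G
  | (n + 1) => bootStep H (bootProc H G n)

/-- The running time of the `H`-process on `G`: the least `t` with `G_{t+1} = G_t`. -/
noncomputable def bootRunTime {α V : Type*} (H : SimpleGraph α) (G : SimpleGraph V) : ℕ :=
  sInf {t | bootProc H G (t + 1) = bootProc H G t}

/-- The final (stabilised) graph of the `H`-process on `G`. -/
noncomputable def bootFinal {α V : Type*} (H : SimpleGraph α) (G : SimpleGraph V) :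
    SimpleGraph V :=
  bootProc H G (bootRunTime H G)

/-- `K_k⁺`: a clique on the vertices `0, …, k-1` of `Fin (k+1)` together with a pendant
vertex `k` attached to the vertex `0`. -/
def cliquePlusPendant (k : ℕ) : SimpleGraph (Fin (k + 1)) where
  Adj u v := u ≠ v ∧
    ((u.val < k ∧ v.val < k) ∨ (u.val = k ∧ v.val = 0) ∨ (u.val = 0 ∧ v.val = k))
  symm := by
    constructor
    intro u v h
    obtain ⟨hne, h2⟩ := h
    exact ⟨hne.symm, by tauto⟩
  loopless := ⟨fun u h => h.1 rfl⟩

/-! If the process does not stop after round 0, round 1 creates a copy of `K_k⁺`, whose clique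
`U` lives in `G₁`. In round 2 every vertex `u ∈ U` becomes adjacent to every `v ∉ U`: the
edge `uv` completes a copy of `K_k⁺` with clique `U` and pendant `v` hanging at `u`. In round 3
any remaining pair `x, y ∉ U` is joined, as `x` together with `k - 1` vertices of `U` is a
clique in `G₂` and `y` can be hung on `x`. So `G₃` is complete and `G₄ = G₃`. -/

section BootstrapProcess

variable {α V : Type*} {H : SimpleGraph α} {G G' : SimpleGraph V} {f : α → V}

theorem IsCopyOf.mono (hf : IsCopyOf H G f) (hle : G ≤ G') : IsCopyOf H G' f :=
  ⟨hf.1, fun a b hab => hle (hf.2 a b hab)⟩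

theorem le_bootStep (H : SimpleGraph α) (G : SimpleGraph V) : G ≤ bootStep H G :=
  fun _ _ h => Or.inl h

theorem bootStep_top (H : SimpleGraph α) : bootStep H (⊤ : SimpleGraph V) = ⊤ :=
  top_le_iff.1 (le_bootStep H ⊤)

theorem exists_isCopyOf_bootStep_of_ne (h : bootStep H G ≠ G) :
    ∃ f : α → V, IsCopyOf H (bootStep H G) f := by
  obtain ⟨u, v, huv, hG⟩ : ∃ u v, (bootStep H G).Adj u v ∧ ¬G.Adj u v := by
    by_contra! hc
    exact h (le_antisymm (fun u v => hc u v) (le_bootStep H G))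
  obtain ⟨-, f, hf, -⟩ := huv.resolve_left hG
  refine ⟨f, hf.mono (sup_le (le_bootStep H G) ?_)⟩
  rintro x y ⟨hxy, -⟩
  rcases Sym2.eq_iff.1 hxy with ⟨rfl, rfl⟩ | ⟨rfl, rfl⟩
  exacts [huv, huv.symm]

theorem bootRunTime_le {t : ℕ} (h : bootProc H G (t + 1) = bootProc H G t) :
    bootRunTime H G ≤ t :=
  Nat.sInf_le h

end BootstrapProcess

section CliquePlusPendant

variable {V : Type*} {k : ℕ} {G : SimpleGraph V}

@[simp]
theorem cliquePlusPendant_adj_castSucc_castSucc {i j : Fin k} :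
    (cliquePlusPendant k).Adj i.castSucc j.castSucc ↔ i ≠ j := by
  simp only [cliquePlusPendant, ne_eq, Fin.ext_iff, Fin.val_castSucc]
  omega

@[simp]
theorem cliquePlusPendant_adj_castSucc_last {i : Fin k} :
    (cliquePlusPendant k).Adj i.castSucc (Fin.last k) ↔ i.val = 0 := by
  simp only [cliquePlusPendant, ne_eq, Fin.ext_iff, Fin.val_castSucc, Fin.val_last, and_true]
  have := i.isLt
  omega

@[simp]
theorem cliquePlusPendant_adj_last_castSucc {i : Fin k} :
    (cliquePlusPendant k).Adj (Fin.last k) i.castSucc ↔ i.val = 0 := by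
  rw [adj_comm, cliquePlusPendant_adj_castSucc_last]

theorem bootStep_cliquePlusPendant_adj_of_notMem_range {c : Fin k → V} (hc : c.Injective)
    (hclique : G.IsClique (Set.range c)) {p : V} (hp : p ∉ Set.range c) (i : Fin k) :
    (bootStep (cliquePlusPendant k) G).Adj (c i) p := by
  -- The pendant of `K_k⁺` hangs at vertex `0`; `σ` moves the attachment point to `i`.
  set σ := Equiv.swap ⟨0, i.pos⟩ i
  have hcσ : (c ∘ σ).Injective := hc.comp σ.injective
  refine Or.inr ⟨fun h => hp ⟨i, h⟩, Fin.snoc (c ∘ σ) p,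
    ⟨Fin.snoc_injective_of_injective hcσ (by simpa using hp), ?_⟩,
    Fin.castSucc ⟨0, i.pos⟩, Fin.last k, cliquePlusPendant_adj_castSucc_last.2 rfl,
    by rw [Fin.snoc_castSucc]; simp [σ], Fin.snoc_last _ _⟩
  have hσ_zero {j : Fin k} (hj : j.val = 0) : σ j = i := by
    rw [show j = ⟨0, i.pos⟩ from Fin.ext hj, Equiv.swap_apply_left]
  intro a b hab
  induction a using Fin.lastCases with
  | last =>
    induction b using Fin.lastCases with
    | last => exact absurd hab (cliquePlusPendant k).irrefl
    | cast b =>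
      rw [Fin.snoc_last, Fin.snoc_castSucc, Function.comp_apply,
        hσ_zero (cliquePlusPendant_adj_last_castSucc.1 hab)]
      exact Or.inr ⟨Sym2.eq_swap, fun h => hp ⟨i, h.symm⟩⟩
  | cast a =>
    induction b using Fin.lastCases with
    | last =>
      rw [Fin.snoc_last, Fin.snoc_castSucc, Function.comp_apply,
        hσ_zero (cliquePlusPendant_adj_castSucc_last.1 hab)]
      exact Or.inr ⟨rfl, fun h => hp ⟨i, h⟩⟩
    | cast b =>
      left
      simp only [Fin.snoc_castSucc, Function.comp_apply]
      exact hclique (Set.mem_range_self _) (Set.mem_range_self _)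
        (hcσ.ne (cliquePlusPendant_adj_castSucc_castSucc.1 hab))

theorem bootStep_cliquePlusPendant_adj_of_ne {c : Fin k → V} (hc : c.Injective)
    (hclique : G.IsClique (Set.range c)) (i : Fin k) {v : V} (hv : v ≠ c i) :
    (bootStep (cliquePlusPendant k) G).Adj (c i) v := by
  by_cases hvc : v ∈ Set.range c
  · exact le_bootStep _ G (hclique (Set.mem_range_self i) hvc hv.symm)
  · exact bootStep_cliquePlusPendant_adj_of_notMem_range hc hclique hvc i

theorem bootStep_cliquePlusPendant_eq_top (hk : 0 < k) {c : Fin k → V} (hc : c.Injective)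
    (huniv : ∀ i v, v ≠ c i → G.Adj (c i) v) : bootStep (cliquePlusPendant k) G = ⊤ := by
  refine eq_top_iff.2 fun x y hxy => ?_
  by_cases hx : x ∈ Set.range c
  · obtain ⟨i, rfl⟩ := hx
    exact le_bootStep _ G (huniv i y hxy.symm)
  by_cases hy : y ∈ Set.range c
  · obtain ⟨i, rfl⟩ := hy
    exact (le_bootStep _ G (huniv i x hxy)).symm
  -- Neither endpoint is universal: swap `x` into the clique and hang `y` on it as the pendant.
  set i₀ : Fin k := ⟨0, hk⟩
  set c' := Function.update c i₀ x
  have hc'₀ : c' i₀ = x := Function.update_self ..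
  have hc'_of_ne {a : Fin k} (ha : a ≠ i₀) : c' a = c a := Function.update_of_ne ha ..
  have hc' : c'.Injective := by
    intro a b hab
    by_cases ha : a = i₀ <;> by_cases hb : b = i₀
    · exact ha.trans hb.symm
    · rw [ha, hc'₀, hc'_of_ne hb] at hab
      exact absurd ⟨b, hab.symm⟩ hx
    · rw [hb, hc'₀, hc'_of_ne ha] at hab
      exact absurd ⟨a, hab⟩ hx
    · rw [hc'_of_ne ha, hc'_of_ne hb] at hab
      exact hc hab
  have hclique : G.IsClique (Set.range c') := by
    rintro _ ⟨a, rfl⟩ _ ⟨b, rfl⟩ hab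
    by_cases ha : a = i₀
    · have hb : b ≠ i₀ := fun hb => hab (by rw [ha, hb])
      rw [ha, hc'₀, hc'_of_ne hb]
      exact (huniv b x fun h => hx ⟨b, h.symm⟩).symm
    · rw [hc'_of_ne ha] at hab ⊢
      exact huniv a _ (Ne.symm hab)
  have hy' : y ∉ Set.range c' := by
    rintro ⟨a, ha⟩
    by_cases h : a = i₀
    · exact hxy (by rw [← ha, h, hc'₀])
    · exact hy ⟨a, by rwa [← hc'_of_ne h]⟩
  exact hc'₀ ▸ bootStep_cliquePlusPendant_adj_of_notMem_range hc' hclique hy' i₀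

theorem IsCopyOf.isClique_range_castSucc {f : Fin (k + 1) → V}
    (hf : IsCopyOf (cliquePlusPendant k) G f) : G.IsClique (Set.range (f ∘ Fin.castSucc)) := by
  rintro _ ⟨i, rfl⟩ _ ⟨j, rfl⟩ hij
  exact hf.2 _ _ (cliquePlusPendant_adj_castSucc_castSucc.2 (by rintro rfl; exact hij rfl))

theorem bootStep_bootStep_cliquePlusPendant_eq_top (hk : 0 < k) {f : Fin (k + 1) → V}
    (hf : IsCopyOf (cliquePlusPendant k) G f) :
    bootStep (cliquePlusPendant k) (bootStep (cliquePlusPendant k) G) = ⊤ :=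
  bootStep_cliquePlusPendant_eq_top hk (hf.1.comp (Fin.castSucc_injective k))
    fun i _ hv => bootStep_cliquePlusPendant_adj_of_ne (hf.1.comp (Fin.castSucc_injective k))
      hf.isClique_range_castSucc i hv

end CliquePlusPendant

/-- For `k ≥ 3`, the `K_k⁺`-bootstrap process on any `n`-vertex graph stabilises within
3 rounds: `M_{K_k⁺}(n) ≤ 3`. -/
theorem stmt_14 (k : ℕ) (hk : 3 ≤ k) (n : ℕ) (G : SimpleGraph (Fin n)) :
    bootRunTime (cliquePlusPendant k) G ≤ 3 := by
  by_cases hG : bootStep (cliquePlusPendant k) G = G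
  · exact (bootRunTime_le (t := 0) hG).trans (by norm_num)
  obtain ⟨f, hf⟩ := exists_isCopyOf_bootStep_of_ne hG
  have h3 : bootProc (cliquePlusPendant k) G 3 = ⊤ :=
    bootStep_bootStep_cliquePlusPendant_eq_top (by omega) hf
  exact bootRunTime_le (by rw [bootProc, h3, bootStep_top])
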